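/- arXiv:2209.12755 — 2 statements merged into one kernel-verified Lean document; each statement's English description precedes it below -/
import Mathlib

section
/- Let N ≥ 2 and T ≥ 1, set P = N+T and L = NP, let I ⊆ Z_P with |I| = T, write Z_P \ I = {l_0 < … < l_{N-1}}, let g : Z_N → Z_N be a permutation, define û_{Pr+l_t} = √(P/N)·ω_N^{r·g(t)}·ω_{NP}^{l_t·g(t)} and û_{Pr+s} = 0 for s ∈ I, and let U be the inverse unitary DFT of Û. Then the maximum autocorrelation sidelobe satisfies max_{0<τ<L} |θ_U(τ)| ≥ P·√(N(P−N)/(P−1)). -/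
/-- Periodic cross-correlation of two length-`L` complex sequences. -/
noncomputable def pcc (L : ℕ) (c d : ℕ → ℂ) (τ : ℕ) : ℂ :=
  ∑ t ∈ Finset.range L, c t * (starRingEnd ℂ) (d ((t + τ) % L))

/-- Inverse unitary DFT of a length-`L` complex sequence. -/
noncomputable def iudft (L : ℕ) (chat : ℕ → ℂ) (t : ℕ) : ℂ :=
  ((Real.sqrt L : ℝ) : ℂ)⁻¹ * ∑ n ∈ Finset.range L,
    chat n * Complex.exp (2 * (Real.pi : ℂ) * Complex.I * (n : ℂ) * (t : ℂ) / (L : ℂ))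

/-- The frequency-domain sequence of Construction 3: writing `n = P·r + s`
(`r = n/P`, `s = n%P`), `û_{Pr+l_t} = √(P/N)·ω_N^{r·g(t)}·ω_{NP}^{l_t·g(t)}` for the
increasing enumeration `l` of the admissible carriers, and `û_{Pr+s} = 0` for
forbidden `s ∈ I` (no `t` matches, so the sum below is empty). -/
noncomputable def uhatG (N P : ℕ) (l g : Fin N → ℕ) (n : ℕ) : ℂ :=
  ∑ t : Fin N,
    if l t = n % P then
      (Real.sqrt ((P : ℝ) / (N : ℝ)) : ℂ) *
        Complex.exp (2 * (Real.pi : ℂ) * Complex.I *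
          (((n / P) * g t : ℕ) : ℂ) / (N : ℂ)) *
        Complex.exp (2 * (Real.pi : ℂ) * Complex.I *
          ((l t * g t : ℕ) : ℂ) / ((N * P : ℕ) : ℂ))
    else 0

section Aux
open Finset Complex

private lemma sum_exp_orth (L : ℕ) (hL : 0 < L) (k : ℤ) :
    ∑ t ∈ Finset.range L, Complex.exp (2 * (Real.pi:ℂ) * Complex.I * k * t / L)
      = if (L:ℤ) ∣ k then (L:ℂ) else 0 := by
  have hL' : (L:ℂ) ≠ 0 := Nat.cast_ne_zero.2 hL.ne'
  have hterm : ∀ t : ℕ, Complex.exp (2 * (Real.pi:ℂ) * Complex.I * k * t / L)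
      = Complex.exp (2 * (Real.pi:ℂ) * Complex.I * k / L) ^ t := by
    intro t
    rw [← Complex.exp_nat_mul]
    ring_nf
  simp only [hterm]
  by_cases hdvd : (L:ℤ) ∣ k
  · obtain ⟨m, hm⟩ := id hdvd
    have h1 : Complex.exp (2 * (Real.pi:ℂ) * Complex.I * k / L) = 1 := by
      have : (2 * (Real.pi:ℂ) * Complex.I * k / L) = m * (2 * Real.pi * Complex.I) := by
        rw [hm]; push_cast; field_simp
      rw [this, Complex.exp_int_mul_two_pi_mul_I]
    simp [h1, hdvd]
  · have h1 : Complex.exp (2 * (Real.pi:ℂ) * Complex.I * k / L) ≠ 1 := by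
      intro h
      rw [Complex.exp_eq_one_iff] at h
      obtain ⟨n, hn⟩ := h
      apply hdvd
      refine ⟨n, ?_⟩
      have hπ : (Real.pi:ℂ) ≠ 0 := Complex.ofReal_ne_zero.2 Real.pi_ne_zero
      have h2 : (k:ℂ) = (L:ℂ) * n := by
        have h3 := hn
        field_simp at h3
        have h4 : (2 * (Real.pi:ℂ) * Complex.I) * (k:ℂ) = (2 * (Real.pi:ℂ) * Complex.I) * ((L:ℂ) * n) := by
          rw [h3]
        have h5 : (2 * (Real.pi:ℂ) * Complex.I) ≠ 0 := by
          simp [Complex.I_ne_zero, hπ]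
        exact mul_left_cancel₀ h5 h4
      exact_mod_cast h2
    rw [geom_sum_eq h1]
    have hpow : Complex.exp (2 * (Real.pi:ℂ) * Complex.I * k / L) ^ L = 1 := by
      rw [← Complex.exp_nat_mul]
      have : (L:ℂ) * (2 * (Real.pi:ℂ) * Complex.I * k / L) = k * (2 * Real.pi * Complex.I) := by
        field_simp
      rw [this, Complex.exp_int_mul_two_pi_mul_I]
    simp [hpow, hdvd]

private noncomputable def ee (L : ℕ) (K s : ℤ) : ℂ :=
  Complex.exp (2 * (Real.pi:ℂ) * Complex.I * K * s / L)

private lemma ee_mul_K (L : ℕ) (K K' s : ℤ) : ee L K s * ee L K' s = ee L (K + K') s := by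
  unfold ee; rw [← Complex.exp_add, ← add_div]; congr 1; push_cast; ring

private lemma ee_add_s (L : ℕ) (K s s' : ℤ) : ee L K (s + s') = ee L K s * ee L K s' := by
  unfold ee; rw [← Complex.exp_add, ← add_div]; congr 1; push_cast; ring

private lemma ee_conj (L : ℕ) (K s : ℤ) : (starRingEnd ℂ) (ee L K s) = ee L (-K) s := by
  unfold ee
  rw [← Complex.exp_conj]
  congr 1
  simp only [map_div₀, map_mul, Complex.conj_I, map_intCast, map_natCast, map_ofNat,
    Complex.conj_ofReal]
  push_cast; ring

private lemma ee_mul_L (L : ℕ) (hL : 0 < L) (K q : ℤ) : ee L K ((L:ℤ) * q) = 1 := by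
  unfold ee
  have hL' : (L:ℂ) ≠ 0 := Nat.cast_ne_zero.2 hL.ne'
  have : 2 * (Real.pi:ℂ) * Complex.I * K * ((L:ℤ):ℂ) * q / L = (K*q : ℤ) * (2 * Real.pi * Complex.I) := by
    push_cast; field_simp
  rw [show ((((L:ℤ) * q : ℤ)):ℂ) = ((L:ℤ):ℂ) * (q:ℂ) by push_cast; ring]
  rw [show 2 * (Real.pi:ℂ) * Complex.I * K * (((L:ℤ):ℂ) * (q:ℂ)) / L
      = 2 * (Real.pi:ℂ) * Complex.I * K * ((L:ℤ):ℂ) * q / L by ring]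
  rw [this, Complex.exp_int_mul_two_pi_mul_I]

private lemma ee_mod (L : ℕ) (hL : 0 < L) (K : ℤ) (a : ℕ) :
    ee L K ((a % L : ℕ) : ℤ) = ee L K a := by
  have h : (a:ℤ) = (L:ℤ) * ((a / L : ℕ):ℤ) + ((a % L : ℕ):ℤ) := by
    exact_mod_cast (Nat.div_add_mod a L).symm
  conv_rhs => rw [h]
  rw [ee_add_s, ee_mul_L L hL, one_mul]

private lemma sum_ee (L : ℕ) (hL : 0 < L) (K : ℤ) :
    ∑ t ∈ Finset.range L, ee L K t = if (L:ℤ) ∣ K then (L:ℂ) else 0 := by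
  rw [← sum_exp_orth L hL K]
  exact Finset.sum_congr rfl fun t _ => by unfold ee; norm_cast

private lemma ee_nat (L n t : ℕ) :
    Complex.exp (2 * (Real.pi:ℂ) * Complex.I * (n:ℂ) * (t:ℂ) / (L:ℂ)) = ee L n t := by
  unfold ee; norm_cast

private lemma ee_zero (L : ℕ) (K : ℤ) : ee L K 0 = 1 := by
  unfold ee; norm_num

private lemma iudft_eq (L : ℕ) (chat : ℕ → ℂ) (s : ℕ) :
    iudft L chat s = ((Real.sqrt L : ℝ) : ℂ)⁻¹ * ∑ n ∈ Finset.range L, chat n * ee L n s := by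
  unfold iudft
  congr 1

private lemma conj_iudft (L : ℕ) (chat : ℕ → ℂ) (s : ℕ) :
    (starRingEnd ℂ) (iudft L chat s)
      = ((Real.sqrt L : ℝ) : ℂ)⁻¹ * ∑ m ∈ Finset.range L,
          (starRingEnd ℂ) (chat m) * ee L (-(m:ℤ)) s := by
  rw [iudft_eq, map_mul, map_inv₀, Complex.conj_ofReal, map_sum]
  congr 1
  refine Finset.sum_congr rfl fun m _ => ?_
  rw [map_mul, ee_conj]

private lemma hsq_aux (L : ℕ) (hL : 0 < L) :
    ((Real.sqrt L : ℝ) : ℂ)⁻¹ * ((Real.sqrt L : ℝ) : ℂ)⁻¹ * (L:ℂ) = 1 := by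
  have h0 : Real.sqrt L ≠ 0 := ne_of_gt (Real.sqrt_pos.2 (by exact_mod_cast hL))
  have h1 : ((Real.sqrt L : ℝ) : ℂ)⁻¹ * ((Real.sqrt L : ℝ) : ℂ)⁻¹ * (L:ℂ)
      = (((Real.sqrt L)⁻¹ * (Real.sqrt L)⁻¹ * L : ℝ) : ℂ) := by push_cast; ring
  rw [h1]
  have h2 : (Real.sqrt L)⁻¹ * (Real.sqrt L)⁻¹ * L = 1 := by
    field_simp
    rw [Real.sq_sqrt (Nat.cast_nonneg _)]
  rw [h2, Complex.ofReal_one]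

private lemma pcc_spec (L : ℕ) (hL : 0 < L) (chat : ℕ → ℂ) (τ : ℕ) :
    pcc L (iudft L chat) (iudft L chat) τ =
      ∑ n ∈ Finset.range L, chat n * (starRingEnd ℂ) (chat n) * ee L (-(n:ℤ)) τ := by
  set c : ℂ := ((Real.sqrt L : ℝ) : ℂ)⁻¹ with hc
  calc pcc L (iudft L chat) (iudft L chat) τ
      = ∑ t ∈ Finset.range L, (c * ∑ n ∈ Finset.range L, chat n * ee L n t) *
          (c * ∑ m ∈ Finset.range L,
            (starRingEnd ℂ) (chat m) * (ee L (-(m:ℤ)) t * ee L (-(m:ℤ)) τ)) := by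
        refine Finset.sum_congr rfl fun t ht => ?_
        rw [iudft_eq, conj_iudft]
        congr 1
        congr 1
        refine Finset.sum_congr rfl fun m _ => ?_
        congr 1
        rw [ee_mod L hL, show (((t+τ:ℕ)):ℤ) = (t:ℤ) + τ by push_cast; ring, ee_add_s]
    _ = ∑ n ∈ Finset.range L, ∑ m ∈ Finset.range L,
          (c * c) * (chat n * (starRingEnd ℂ) (chat m) * ee L (-(m:ℤ)) τ) *
            ∑ t ∈ Finset.range L, ee L ((n:ℤ) - m) t := by
        have expand : ∀ t : ℕ, (c * ∑ n ∈ Finset.range L, chat n * ee L n t) *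
            (c * ∑ m ∈ Finset.range L,
              (starRingEnd ℂ) (chat m) * (ee L (-(m:ℤ)) t * ee L (-(m:ℤ)) τ)) =
            ∑ n ∈ Finset.range L, ∑ m ∈ Finset.range L,
              (c * c) * (chat n * (starRingEnd ℂ) (chat m) * ee L (-(m:ℤ)) τ) *
                ee L ((n:ℤ) - m) t := by
          intro t
          rw [mul_mul_mul_comm, Finset.sum_mul_sum, Finset.mul_sum]
          refine Finset.sum_congr rfl fun n _ => ?_
          rw [Finset.mul_sum]
          refine Finset.sum_congr rfl fun m _ => ?_
          rw [show ((n:ℤ) - m) = (n:ℤ) + (-(m:ℤ)) by ring, ← ee_mul_K]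
          ring
        simp only [expand]
        rw [Finset.sum_comm]
        refine Finset.sum_congr rfl fun n _ => ?_
        rw [Finset.sum_comm]
        refine Finset.sum_congr rfl fun m _ => ?_
        rw [← Finset.mul_sum]
    _ = ∑ n ∈ Finset.range L, chat n * (starRingEnd ℂ) (chat n) * ee L (-(n:ℤ)) τ := by
        refine Finset.sum_congr rfl fun n hn => ?_
        simp only [sum_ee L hL]
        rw [Finset.sum_eq_single_of_mem n hn]
        · rw [if_pos (by simp : (L:ℤ) ∣ (n:ℤ) - n)]
          have h1 : (c * c) * (chat n * (starRingEnd ℂ) (chat n) * ee L (-(n:ℤ)) τ) * L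
              = (c * c * L) * (chat n * (starRingEnd ℂ) (chat n) * ee L (-(n:ℤ)) τ) := by ring
          rw [h1, hsq_aux L hL, one_mul]
        · intro m hm hne
          rw [if_neg, mul_zero]
          intro hdvd
          have habs : |(n:ℤ) - m| < L := by
            have h3 := Finset.mem_range.1 hm
            have h4 := Finset.mem_range.1 hn
            rw [abs_sub_lt_iff]
            constructor <;> (push_cast; omega)
          have h2 : ((n:ℤ) - m) = 0 := Int.eq_zero_of_abs_lt_dvd hdvd habs
          have h5 : n = m := by exact_mod_cast sub_eq_zero.1 h2
          exact hne h5.symm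

private lemma sum_range_mul' {M : Type*} [AddCommMonoid M] (f : ℕ → M) (N P : ℕ) :
    ∑ n ∈ Finset.range (N * P), f n = ∑ r ∈ Finset.range N, ∑ s ∈ Finset.range P, f (P * r + s) := by
  induction N with
  | zero => simp
  | succ n ih =>
      rw [Nat.succ_mul, Finset.sum_range_add, ih, Finset.sum_range_succ]
      congr 1
      exact Finset.sum_congr rfl fun s _ => by ring_nf

private lemma exp_mul_conj_self (a b : ℕ) :
    Complex.exp (2*(Real.pi:ℂ)*Complex.I*(a:ℂ)/(b:ℂ)) *
      (starRingEnd ℂ) (Complex.exp (2*(Real.pi:ℂ)*Complex.I*(a:ℂ)/(b:ℂ))) = 1 := by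
  rw [← Complex.exp_conj, ← Complex.exp_add]
  have h : 2*(Real.pi:ℂ)*Complex.I*(a:ℂ)/(b:ℂ) +
      (starRingEnd ℂ) (2*(Real.pi:ℂ)*Complex.I*(a:ℂ)/(b:ℂ)) = 0 := by
    simp only [map_div₀, map_mul, Complex.conj_I, Complex.conj_ofReal, map_natCast, map_ofNat]
    ring
  rw [h, Complex.exp_zero]

private lemma uhat_sq (N P : ℕ) (hN : 0 < N) (l gg : Fin N → ℕ) (hinj : Function.Injective l)
    (n : ℕ) :
    uhatG N P l gg n * (starRingEnd ℂ) (uhatG N P l gg n)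
      = ∑ t : Fin N, if l t = n % P then ((P:ℂ)/(N:ℂ)) else 0 := by
  unfold uhatG
  by_cases h : ∃ t, l t = n % P
  · obtain ⟨t0, ht0⟩ := h
    have hL : (∑ t : Fin N,
        if l t = n % P then
          (Real.sqrt ((P : ℝ) / (N : ℝ)) : ℂ) *
            Complex.exp (2 * (Real.pi : ℂ) * Complex.I * (((n / P) * gg t : ℕ) : ℂ) / (N : ℂ)) *
            Complex.exp (2 * (Real.pi : ℂ) * Complex.I * ((l t * gg t : ℕ) : ℂ) / ((N * P : ℕ) : ℂ))
        else 0)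
        = (Real.sqrt ((P : ℝ) / (N : ℝ)) : ℂ) *
            Complex.exp (2 * (Real.pi : ℂ) * Complex.I * (((n / P) * gg t0 : ℕ) : ℂ) / (N : ℂ)) *
            Complex.exp (2 * (Real.pi : ℂ) * Complex.I * ((l t0 * gg t0 : ℕ) : ℂ) / ((N * P : ℕ) : ℂ)) := by
      rw [Finset.sum_eq_single_of_mem t0 (Finset.mem_univ t0)]
      · rw [if_pos ht0]
      · intro t _ hne
        rw [if_neg (fun he => hne (hinj (he.trans ht0.symm)))]
    have hR : (∑ t : Fin N, if l t = n % P then ((P:ℂ)/(N:ℂ)) else 0) = ((P:ℂ)/(N:ℂ)) := by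
      rw [Finset.sum_eq_single_of_mem t0 (Finset.mem_univ t0)]
      · rw [if_pos ht0]
      · intro t _ hne
        rw [if_neg (fun he => hne (hinj (he.trans ht0.symm)))]
    rw [hL, hR, map_mul, map_mul, Complex.conj_ofReal]
    have e1 := exp_mul_conj_self ((n / P) * gg t0) N
    have e2 := exp_mul_conj_self (l t0 * gg t0) (N * P)
    have hs : ((Real.sqrt ((P:ℝ)/(N:ℝ)) : ℝ) : ℂ) * ((Real.sqrt ((P:ℝ)/(N:ℝ)) : ℝ) : ℂ)
        = ((P:ℂ)/(N:ℂ)) := by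
      rw [← Complex.ofReal_mul, Real.mul_self_sqrt (by positivity)]
      push_cast; ring
    calc _ = (((Real.sqrt ((P:ℝ)/(N:ℝ)) : ℝ) : ℂ) * ((Real.sqrt ((P:ℝ)/(N:ℝ)) : ℝ) : ℂ)) *
            (Complex.exp (2 * (Real.pi : ℂ) * Complex.I * (((n / P) * gg t0 : ℕ) : ℂ) / (N : ℂ)) *
              (starRingEnd ℂ) (Complex.exp (2 * (Real.pi : ℂ) * Complex.I * (((n / P) * gg t0 : ℕ) : ℂ) / (N : ℂ)))) *
            (Complex.exp (2 * (Real.pi : ℂ) * Complex.I * ((l t0 * gg t0 : ℕ) : ℂ) / ((N * P : ℕ) : ℂ)) *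
              (starRingEnd ℂ) (Complex.exp (2 * (Real.pi : ℂ) * Complex.I * ((l t0 * gg t0 : ℕ) : ℂ) / ((N * P : ℕ) : ℂ)))) := by
          push_cast
          ring
      _ = ((P:ℂ)/(N:ℂ)) := by
          rw [hs]
          push_cast at e1 e2 ⊢
          rw [e1, e2, mul_one, mul_one]
  · push_neg at h
    have hz : ∀ (f : Fin N → ℂ), (∑ t : Fin N, if l t = n % P then f t else 0) = 0 := by
      intro f
      refine Finset.sum_eq_zero fun t _ => if_neg (h t)
    rw [hz, hz, zero_mul]

private lemma ee_collapse (N P : ℕ) (hN : 0 < N) (hP : 0 < P) (r a k : ℕ) :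
    ee (N*P) (-((P*r + a : ℕ):ℤ)) (((N*k : ℕ):ℤ)) = ee P (-(a:ℤ)) k := by
  unfold ee
  have hN' : (N:ℂ) ≠ 0 := Nat.cast_ne_zero.2 hN.ne'
  have hP' : (P:ℂ) ≠ 0 := Nat.cast_ne_zero.2 hP.ne'
  have h : 2 * (Real.pi:ℂ) * Complex.I * ((-((P*r + a : ℕ):ℤ) : ℤ):ℂ) * (((N*k : ℕ):ℤ):ℂ) / ((N*P : ℕ):ℂ)
      = 2 * (Real.pi:ℂ) * Complex.I * ((-(a:ℤ) : ℤ):ℂ) * ((k:ℤ):ℂ) / (P:ℂ)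
        + ((-(r*k:ℤ) : ℤ):ℂ) * (2 * (Real.pi:ℂ) * Complex.I) := by
    push_cast
    field_simp
    ring
  rw [h, Complex.exp_add, Complex.exp_int_mul_two_pi_mul_I, mul_one]

private lemma sum_S_conj (N P : ℕ) (hP : 0 < P) (l : Fin N → ℕ) (hinj : Function.Injective l)
    (hlP : ∀ t, l t < P) :
    ∑ k ∈ Finset.range P, (∑ t : Fin N, ee P (-(l t : ℤ)) k) *
      (starRingEnd ℂ) (∑ t : Fin N, ee P (-(l t : ℤ)) k) = ((N * P : ℕ) : ℂ) := by
  have step : ∀ k : ℕ, (∑ t : Fin N, ee P (-(l t : ℤ)) k) *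
      (starRingEnd ℂ) (∑ t : Fin N, ee P (-(l t : ℤ)) k)
      = ∑ t : Fin N, ∑ t' : Fin N, ee P ((l t' : ℤ) - (l t : ℤ)) k := by
    intro k
    rw [map_sum, Finset.sum_mul_sum]
    refine Finset.sum_congr rfl fun t _ => Finset.sum_congr rfl fun t' _ => ?_
    rw [ee_conj, neg_neg, ee_mul_K]
    congr 1
    ring
  simp only [step]
  rw [Finset.sum_comm]
  have inner : ∀ t : Fin N, ∑ k ∈ Finset.range P, ∑ t' : Fin N, ee P ((l t' : ℤ) - l t) k
      = (P:ℂ) := by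
    intro t
    rw [Finset.sum_comm]
    rw [Finset.sum_eq_single_of_mem t (Finset.mem_univ t)]
    · rw [sub_self, sum_ee P hP, if_pos (dvd_zero _)]
    · intro t' _ hne
      rw [sum_ee P hP, if_neg]
      intro hdvd
      have habs : |(l t' : ℤ) - l t| < P := by
        have h1 := hlP t
        have h2 := hlP t'
        rw [abs_sub_lt_iff]
        constructor <;> (push_cast; omega)
      have h0 : (l t' : ℤ) - l t = 0 := Int.eq_zero_of_abs_lt_dvd hdvd habs
      have h5 : l t' = l t := by exact_mod_cast sub_eq_zero.1 h0
      exact hne (hinj h5)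
  calc ∑ t : Fin N, ∑ k ∈ Finset.range P, ∑ t' : Fin N, ee P ((l t' : ℤ) - l t) k
      = ∑ _t : Fin N, (P:ℂ) := Finset.sum_congr rfl fun t _ => inner t
    _ = ((N * P : ℕ):ℂ) := by
        rw [Finset.sum_const, Finset.card_univ, Fintype.card_fin]
        push_cast
        ring

private lemma theta_val (N P : ℕ) (hN : 0 < N) (hP : 0 < P) (l gg : Fin N → ℕ)
    (hinj : Function.Injective l) (hlP : ∀ t, l t < P) (k : ℕ) :
    pcc (N*P) (iudft (N*P) (uhatG N P l gg)) (iudft (N*P) (uhatG N P l gg)) (N*k)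
      = (P:ℂ) * ∑ t : Fin N, ee P (-(l t : ℤ)) k := by
  have hL : 0 < N*P := Nat.mul_pos hN hP
  have hN' : (N:ℂ) ≠ 0 := Nat.cast_ne_zero.2 hN.ne'
  rw [pcc_spec (N*P) hL _ (N*k)]
  simp only [uhat_sq N P hN l gg hinj]
  rw [sum_range_mul' (fun n => (∑ t : Fin N, if l t = n % P then ((P:ℂ)/(N:ℂ)) else 0) *
    ee (N*P) (-(n:ℤ)) ((N*k : ℕ):ℤ)) N P]
  have hr1 : ∀ r : ℕ, (∑ s ∈ Finset.range P,
      (∑ t : Fin N, if l t = (P*r+s) % P then ((P:ℂ)/(N:ℂ)) else 0) *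
        ee (N*P) (-((P*r+s:ℕ):ℤ)) ((N*k : ℕ):ℤ))
      = ((P:ℂ)/(N:ℂ)) * ∑ t : Fin N, ee P (-(l t : ℤ)) k := by
    intro r
    have hmod : ∀ s, s < P → (P*r+s) % P = s := by
      intro s hs
      rw [add_comm, Nat.add_mul_mod_self_left, Nat.mod_eq_of_lt hs]
    calc (∑ s ∈ Finset.range P,
          (∑ t : Fin N, if l t = (P*r+s) % P then ((P:ℂ)/(N:ℂ)) else 0) *
            ee (N*P) (-((P*r+s:ℕ):ℤ)) ((N*k : ℕ):ℤ))
        = ∑ s ∈ Finset.range P, ∑ t : Fin N,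
            (if l t = s then ((P:ℂ)/(N:ℂ)) * ee (N*P) (-((P*r+s:ℕ):ℤ)) ((N*k : ℕ):ℤ) else 0) := by
          refine Finset.sum_congr rfl fun s hs => ?_
          rw [hmod s (Finset.mem_range.1 hs), Finset.sum_mul]
          refine Finset.sum_congr rfl fun t _ => ?_
          rw [ite_mul, zero_mul]
      _ = ∑ t : Fin N, ∑ s ∈ Finset.range P,
            (if l t = s then ((P:ℂ)/(N:ℂ)) * ee (N*P) (-((P*r+s:ℕ):ℤ)) ((N*k : ℕ):ℤ) else 0) :=
          Finset.sum_comm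
      _ = ∑ t : Fin N, ((P:ℂ)/(N:ℂ)) * ee P (-(l t : ℤ)) k := by
          refine Finset.sum_congr rfl fun t _ => ?_
          rw [Finset.sum_ite_eq (Finset.range P) (l t)
            (fun s => ((P:ℂ)/(N:ℂ)) * ee (N*P) (-((P*r+s:ℕ):ℤ)) ((N*k : ℕ):ℤ)),
            if_pos (Finset.mem_range.2 (hlP t)), ee_collapse N P hN hP r (l t) k]
      _ = ((P:ℂ)/(N:ℂ)) * ∑ t : Fin N, ee P (-(l t : ℤ)) k := by
          rw [Finset.mul_sum]
  calc (∑ r ∈ Finset.range N, ∑ s ∈ Finset.range P,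
        (∑ t : Fin N, if l t = (P*r+s) % P then ((P:ℂ)/(N:ℂ)) else 0) *
          ee (N*P) (-((P*r+s:ℕ):ℤ)) ((N*k : ℕ):ℤ))
      = ∑ _r ∈ Finset.range N, ((P:ℂ)/(N:ℂ)) * ∑ t : Fin N, ee P (-(l t : ℤ)) k :=
        Finset.sum_congr rfl fun r _ => hr1 r
    _ = (N:ℂ) * (((P:ℂ)/(N:ℂ)) * ∑ t : Fin N, ee P (-(l t : ℤ)) k) := by
        rw [Finset.sum_const, Finset.card_range, nsmul_eq_mul]
    _ = (P:ℂ) * ∑ t : Fin N, ee P (-(l t : ℤ)) k := by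
        rw [← mul_assoc]
        congr 1
        field_simp

end Aux

/-- in the setting of Construction 3 (`N ≥ 2`, `T ≥ 1`, `P = N+T`,
`L = NP`, `I ⊆ Z_P` with `|I| = T`, increasing enumeration `l` of `Z_P \ I`, `g` a
permutation of `Z_N`), the maximum autocorrelation sidelobe of the time-domain
sequence `U` is at least `P·√(N(P−N)/(P−1))`: some `|θ_U(τ)|` with `0 < τ < L`
attains at least this value. -/
theorem stmt15 (N T : ℕ) (hN : 2 ≤ N) (hT : 1 ≤ T)
    (I : Finset ℕ) (hIsub : I ⊆ Finset.range (N + T)) (hIcard : I.card = T)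
    (l : Fin N → ℕ) (hlmono : StrictMono l) (hlP : ∀ t, l t < N + T)
    (hlI : ∀ s < N + T, (s ∉ I ↔ ∃ t, l t = s))
    (g : Equiv.Perm (ZMod N))
    (U : ℕ → ℂ)
    (hU : ∀ t, U t =
      iudft (N * (N + T)) (uhatG N (N + T) l (fun t => (g ((t : ℕ) : ZMod N)).val)) t) :
    ∃ τ : ℕ, 0 < τ ∧ τ < N * (N + T) ∧
      ((N + T : ℕ) : ℝ) * Real.sqrt ((N : ℝ) * (((N + T : ℕ) : ℝ) - (N : ℝ)) /
          (((N + T : ℕ) : ℝ) - 1)) ≤ ‖pcc (N * (N + T)) U U τ‖ := by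
  set P := N + T with hPdef
  have hNpos : 0 < N := by omega
  have hPpos : 0 < P := by omega
  have hinj : Function.Injective l := hlmono.injective
  set gg : Fin N → ℕ := fun t => (g ((t : ℕ) : ZMod N)).val with hgg
  set S : ℕ → ℂ := fun k => ∑ t : Fin N, ee P (-(l t : ℤ)) k with hS
  have hUpcc : ∀ τ : ℕ, pcc (N*P) U U τ
      = pcc (N*P) (iudft (N*P) (uhatG N P l gg)) (iudft (N*P) (uhatG N P l gg)) τ := by
    intro τ
    unfold pcc
    exact Finset.sum_congr rfl fun t _ => by rw [hU, hU]
  have htheta : ∀ k : ℕ, pcc (N*P) U U (N*k) = (P:ℂ) * S k := fun k => by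
    rw [hUpcc, theta_val N P hNpos hPpos l gg hinj hlP k]
  have hsum : ∑ k ∈ Finset.range P, Complex.normSq (S k) = (N:ℝ) * P := by
    have h5 := sum_S_conj N P hPpos l hinj hlP
    simp only [Complex.mul_conj] at h5
    have h6 : ∑ k ∈ Finset.range P, Complex.normSq (S k) = ((N*P : ℕ):ℝ) := by
      exact_mod_cast h5
    rw [h6]; push_cast; ring
  have hS0 : S 0 = (N:ℂ) := by
    simp only [hS]
    have : ∀ t : Fin N, ee P (-(l t : ℤ)) ((0:ℕ):ℤ) = 1 := fun t => by
      rw [show ((0:ℕ):ℤ) = 0 from rfl, ee_zero]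
    rw [Finset.sum_congr rfl fun t _ => this t]
    simp
  have hS0n : Complex.normSq (S 0) = (N:ℝ) * N := by rw [hS0, Complex.normSq_natCast]
  have htail : ∑ k ∈ Finset.Ico 1 P, Complex.normSq (S k) = (N:ℝ) * ((P:ℝ) - N) := by
    have h7 := hsum
    rw [Finset.range_eq_Ico, Finset.sum_eq_sum_Ico_succ_bot hPpos, hS0n] at h7
    have hNP : (N:ℝ) ≤ (P:ℝ) := by exact_mod_cast (by omega : N ≤ P)
    nlinarith [h7]
  set A : ℝ := (N:ℝ) * ((P:ℝ) - (N:ℝ)) / ((P:ℝ) - 1) with hA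
  have hP1 : (1:ℝ) < (P:ℝ) := by exact_mod_cast (by omega : 1 < P)
  have hconst : ∑ _k ∈ Finset.Ico 1 P, A = (N:ℝ) * ((P:ℝ) - N) := by
    rw [Finset.sum_const, Nat.card_Ico, nsmul_eq_mul,
      show ((P - 1 : ℕ):ℝ) = (P:ℝ) - 1 by push_cast [Nat.cast_sub (by omega : 1 ≤ P)]; ring]
    rw [hA]
    rw [mul_div_assoc', mul_comm, mul_div_assoc]
    rw [div_self (by linarith : (P:ℝ) - 1 ≠ 0), mul_one]
  have hne : (Finset.Ico 1 P).Nonempty := ⟨1, Finset.mem_Ico.2 ⟨le_refl 1, by omega⟩⟩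
  obtain ⟨k, hk, hkA⟩ := Finset.exists_le_of_sum_le hne
    (le_of_eq (hconst.trans htail.symm))
  obtain ⟨hk1, hkP⟩ := Finset.mem_Ico.1 hk
  refine ⟨N*k, by positivity, (mul_lt_mul_iff_right₀ hNpos).2 hkP, ?_⟩
  rw [htheta k, norm_mul]
  have hnormP : ‖((P:ℕ):ℂ)‖ = (P:ℝ) := by simp
  rw [hnormP]
  refine mul_le_mul_of_nonneg_left ?_ (by positivity)
  have h8 : Real.sqrt A ≤ Real.sqrt (Complex.normSq (S k)) := Real.sqrt_le_sqrt hkA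
  rw [Complex.norm_def]
  exact h8
end

section
/- Let N ≥ 2 and T ≥ 1, set P = N+T and L = NP, let I ⊆ Z_P with |I| = T, write Z_P \ I = {l_0 < … < l_{N-1}}, let g : Z_N → Z_N be a permutation, and let H = (h_{c,s}) be an N×N complex matrix whose rows are pairwise orthogonal, i.e., Σ_{s=0}^{N-1} h_{c_0,s}·conj(h_{c_1,s}) = 0 for c_0 ≠ c_1. For each 0 ≤ c < N define û^c_{Pr+l_t} = √(P/N)·ω_N^{r·g(t)}·h_{c,t} and û^c_{Pr+s} = 0 for s ∈ I, and let U^c be the inverse unitary DFT of Û^c. Then the set {U^0,…,U^{N-1}} is a ZCZ sequence set with zero-correlation-zone width N: θ_{U^{c_0}, U^{c_1}}(τ) = 0 for all 0 ≤ c_0, c_1 < N and 0 < τ < N, and θ_{U^{c_0}, U^{c_1}}(0) = 0 for all c_0 ≠ c_1. -/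
/-- The frequency-domain sequence of Construction 4: writing `n = P·r + s`
(`r = n/P`, `s = n%P`), `û_{Pr+l_t} = √(P/N)·ω_N^{r·g(t)}·h(t)` for the increasing
enumeration `l` of the admissible carriers, and `û_{Pr+s} = 0` for forbidden `s ∈ I`
(no `t` matches, so the sum below is empty). -/
noncomputable def uhatH (N P : ℕ) (l g : Fin N → ℕ) (h : Fin N → ℂ) (n : ℕ) : ℂ :=
  ∑ t : Fin N,
    if l t = n % P then
      (Real.sqrt ((P : ℝ) / (N : ℝ)) : ℂ) *
        Complex.exp (2 * (Real.pi : ℂ) * Complex.I *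
          (((n / P) * g t : ℕ) : ℂ) / (N : ℂ)) * h t
    else 0



private lemma conjExp (z : ℂ) (hz : (starRingEnd ℂ) z = -z) :
    (starRingEnd ℂ) (Complex.exp z) = Complex.exp (-z) := by
  rw [← Complex.exp_conj, hz]

private lemma conj_two_pi_I_nat (x y : ℕ) :
    (starRingEnd ℂ) (2 * (Real.pi : ℂ) * Complex.I * (x : ℂ) / (y : ℂ)) =
      -(2 * (Real.pi : ℂ) * Complex.I * (x : ℂ) / (y : ℂ)) := by
  simp [map_div₀, Complex.conj_I, map_ofNat]
  ring

private lemma conj_two_pi_I_nat2 (x y z : ℕ) :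
    (starRingEnd ℂ) (2 * (Real.pi : ℂ) * Complex.I * (x : ℂ) * (y : ℂ) / (z : ℂ)) =
      -(2 * (Real.pi : ℂ) * Complex.I * (x : ℂ) * (y : ℂ) / (z : ℂ)) := by
  simp [map_div₀, Complex.conj_I, map_ofNat]
  ring

private lemma expMod (L m x : ℕ) :
    Complex.exp (2 * (Real.pi : ℂ) * Complex.I * (m : ℂ) * ((x % L : ℕ) : ℂ) / (L : ℂ)) =
    Complex.exp (2 * (Real.pi : ℂ) * Complex.I * (m : ℂ) * (x : ℂ) / (L : ℂ)) := by
  rcases Nat.eq_zero_or_pos L with hL | hL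
  · simp [hL, Nat.mod_zero]
  · have hL' : (L : ℂ) ≠ 0 := Nat.cast_ne_zero.2 hL.ne'
    conv_rhs => rw [← Nat.mod_add_div x L]
    have : 2 * (Real.pi : ℂ) * Complex.I * (m : ℂ) * (((x % L) + L * (x / L) : ℕ) : ℂ) / (L : ℂ)
        = 2 * (Real.pi : ℂ) * Complex.I * (m : ℂ) * ((x % L : ℕ) : ℂ) / (L : ℂ)
          + ((m * (x / L) : ℕ) : ℂ) * (2 * (Real.pi : ℂ) * Complex.I) := by
      push_cast
      field_simp
    rw [this, Complex.exp_add, Complex.exp_nat_mul_two_pi_mul_I, mul_one]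

private lemma orth (L : ℕ) (hL : 0 < L) (n m : ℕ) (hn : n < L) (hm : m < L) :
    ∑ t ∈ Finset.range L,
      Complex.exp (2 * (Real.pi : ℂ) * Complex.I * (n : ℂ) * (t : ℂ) / (L : ℂ)) *
      Complex.exp (-(2 * (Real.pi : ℂ) * Complex.I * (m : ℂ) * (t : ℂ) / (L : ℂ))) =
    if n = m then (L : ℂ) else 0 := by
  have hL' : (L : ℂ) ≠ 0 := Nat.cast_ne_zero.2 hL.ne'
  set z : ℂ := 2 * (Real.pi : ℂ) * Complex.I * ((n : ℂ) - (m : ℂ)) / (L : ℂ) with hz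
  have hterm : ∀ t ∈ Finset.range L,
      Complex.exp (2 * (Real.pi : ℂ) * Complex.I * (n : ℂ) * (t : ℂ) / (L : ℂ)) *
      Complex.exp (-(2 * (Real.pi : ℂ) * Complex.I * (m : ℂ) * (t : ℂ) / (L : ℂ)))
      = Complex.exp z ^ t := by
    intro t _
    rw [← Complex.exp_add, ← Complex.exp_nat_mul, hz]
    congr 1
    field_simp
    ring
  rw [Finset.sum_congr rfl hterm]
  by_cases h : n = m
  · subst h
    have : z = 0 := by rw [hz]; ring
    simp [this]
  · have hx : Complex.exp z ≠ 1 := by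
      intro h1
      rw [Complex.exp_eq_one_iff] at h1
      obtain ⟨k, hk⟩ := h1
      have h2pii : (2 * (Real.pi : ℂ) * Complex.I) ≠ 0 := by
        simp [Real.pi_ne_zero, Complex.I_ne_zero]
      have hcast : ((n : ℂ) - (m : ℂ)) = (k : ℂ) * (L : ℂ) := by
        rw [hz, div_eq_iff hL'] at hk
        exact mul_left_cancel₀ h2pii (by linear_combination hk)
      have hint : (n : ℤ) - (m : ℤ) = k * (L : ℤ) := by
        exact_mod_cast hcast
      have hL0 : (0 : ℤ) < (L : ℤ) := by exact_mod_cast hL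
      rcases lt_trichotomy k 0 with h' | h' | h'
      · have : k * (L : ℤ) ≤ -1 * L := mul_le_mul_of_nonneg_right (by omega) hL0.le
        omega
      · subst h'
        simp at hint
        omega
      · have : 1 * (L : ℤ) ≤ k * L := mul_le_mul_of_nonneg_right (by omega) hL0.le
        omega
    rw [geom_sum_eq hx]
    have hxL : Complex.exp z ^ L = 1 := by
      rw [← Complex.exp_nat_mul]
      have : (L : ℂ) * z = ((n : ℂ) - (m : ℂ)) * (2 * (Real.pi : ℂ) * Complex.I) := by
        rw [hz]; field_simp
      rw [this]
      have : ((n : ℂ) - (m : ℂ)) = (((n : ℤ) - (m : ℤ) : ℤ) : ℂ) := by push_cast; ring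
      rw [this, Complex.exp_int_mul_two_pi_mul_I]
    simp [hxL, h]

private lemma pcc_iudft (L : ℕ) (hL : 0 < L) (a b : ℕ → ℂ) (τ : ℕ) :
    pcc L (iudft L a) (iudft L b) τ =
      ∑ n ∈ Finset.range L, a n * (starRingEnd ℂ) (b n) *
        Complex.exp (-(2 * (Real.pi : ℂ) * Complex.I * (n : ℂ) * (τ : ℂ) / (L : ℂ))) := by
  have hL' : (L : ℂ) ≠ 0 := Nat.cast_ne_zero.2 hL.ne'
  have hs : ((Real.sqrt L : ℝ) : ℂ) ≠ 0 := by
    simp only [ne_eq, Complex.ofReal_eq_zero]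
    positivity
  have hss : ((Real.sqrt L : ℝ) : ℂ)⁻¹ * ((Real.sqrt L : ℝ) : ℂ)⁻¹ * (L : ℂ) = 1 := by
    rw [← mul_inv]
    rw [← Complex.ofReal_mul, Real.mul_self_sqrt (Nat.cast_nonneg L)]
    simp [hL']
  -- expand
  unfold pcc iudft
  have step1 : ∀ t ∈ Finset.range L,
      (((Real.sqrt L : ℝ) : ℂ)⁻¹ * ∑ n ∈ Finset.range L,
        a n * Complex.exp (2 * (Real.pi : ℂ) * Complex.I * (n : ℂ) * (t : ℂ) / (L : ℂ))) *
      (starRingEnd ℂ) (((Real.sqrt L : ℝ) : ℂ)⁻¹ * ∑ m ∈ Finset.range L,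
        b m * Complex.exp (2 * (Real.pi : ℂ) * Complex.I * (m : ℂ) * ((((t + τ) % L : ℕ)) : ℂ) / (L : ℂ)))
      = ((Real.sqrt L : ℝ) : ℂ)⁻¹ * ((Real.sqrt L : ℝ) : ℂ)⁻¹ *
        ∑ n ∈ Finset.range L, ∑ m ∈ Finset.range L,
          (a n * (starRingEnd ℂ) (b m) *
            Complex.exp (-(2 * (Real.pi : ℂ) * Complex.I * (m : ℂ) * (τ : ℂ) / (L : ℂ)))) *
          (Complex.exp (2 * (Real.pi : ℂ) * Complex.I * (n : ℂ) * (t : ℂ) / (L : ℂ)) *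
           Complex.exp (-(2 * (Real.pi : ℂ) * Complex.I * (m : ℂ) * (t : ℂ) / (L : ℂ)))) := by
    intro t _
    rw [map_mul, map_inv₀, Complex.conj_ofReal, map_sum]
    have hconj : ∀ m ∈ Finset.range L,
        (starRingEnd ℂ) (b m * Complex.exp (2 * (Real.pi : ℂ) * Complex.I * (m : ℂ) * ((((t + τ) % L : ℕ)) : ℂ) / (L : ℂ)))
        = (starRingEnd ℂ) (b m) *
          (Complex.exp (-(2 * (Real.pi : ℂ) * Complex.I * (m : ℂ) * (t : ℂ) / (L : ℂ))) *
           Complex.exp (-(2 * (Real.pi : ℂ) * Complex.I * (m : ℂ) * (τ : ℂ) / (L : ℂ)))) := by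
      intro m _
      rw [map_mul]
      congr 1
      rw [conjExp _ (conj_two_pi_I_nat2 m _ L)]
      rw [Complex.exp_neg, expMod L m (t + τ), ← Complex.exp_neg, ← Complex.exp_add]
      congr 1
      push_cast
      field_simp
      ring
    rw [Finset.sum_congr rfl hconj, mul_mul_mul_comm, Finset.sum_mul_sum]
    congr 1
    apply Finset.sum_congr rfl; intro n _
    apply Finset.sum_congr rfl; intro m _
    ring
  rw [Finset.sum_congr rfl step1, ← Finset.mul_sum]
  rw [Finset.sum_comm]
  have step2 : ∀ n ∈ Finset.range L,
      (∑ t ∈ Finset.range L, ∑ m ∈ Finset.range L,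
        (a n * (starRingEnd ℂ) (b m) *
          Complex.exp (-(2 * (Real.pi : ℂ) * Complex.I * (m : ℂ) * (τ : ℂ) / (L : ℂ)))) *
        (Complex.exp (2 * (Real.pi : ℂ) * Complex.I * (n : ℂ) * (t : ℂ) / (L : ℂ)) *
         Complex.exp (-(2 * (Real.pi : ℂ) * Complex.I * (m : ℂ) * (t : ℂ) / (L : ℂ)))))
      = (L : ℂ) * (a n * (starRingEnd ℂ) (b n) *
          Complex.exp (-(2 * (Real.pi : ℂ) * Complex.I * (n : ℂ) * (τ : ℂ) / (L : ℂ)))) := by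
    intro n hn
    rw [Finset.sum_comm]
    have : ∀ m ∈ Finset.range L,
        (∑ t ∈ Finset.range L,
          (a n * (starRingEnd ℂ) (b m) *
            Complex.exp (-(2 * (Real.pi : ℂ) * Complex.I * (m : ℂ) * (τ : ℂ) / (L : ℂ)))) *
          (Complex.exp (2 * (Real.pi : ℂ) * Complex.I * (n : ℂ) * (t : ℂ) / (L : ℂ)) *
           Complex.exp (-(2 * (Real.pi : ℂ) * Complex.I * (m : ℂ) * (t : ℂ) / (L : ℂ)))))
        = (a n * (starRingEnd ℂ) (b m) *
            Complex.exp (-(2 * (Real.pi : ℂ) * Complex.I * (m : ℂ) * (τ : ℂ) / (L : ℂ)))) *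
          (if n = m then (L : ℂ) else 0) := by
      intro m hm
      rw [← Finset.mul_sum, orth L hL n m (Finset.mem_range.1 hn) (Finset.mem_range.1 hm)]
    rw [Finset.sum_congr rfl this]
    simp only [mul_ite, mul_zero]
    rw [Finset.sum_ite_eq (Finset.range L) n]
    simp only [hn, if_true]
    ring
  rw [Finset.sum_congr rfl step2, ← Finset.mul_sum, ← mul_assoc, hss, one_mul]

private lemma sum_range_mul_eq (N P : ℕ) (hP : 0 < P) (F : ℕ → ℂ) :
    ∑ n ∈ Finset.range (N * P), F n
      = ∑ r ∈ Finset.range N, ∑ s ∈ Finset.range P, F (P * r + s) := by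
  rw [← Finset.sum_product']
  apply Finset.sum_nbij' (i := fun n => (n / P, n % P)) (j := fun p => P * p.1 + p.2)
  · intro n hn
    simp only [Finset.mem_range] at hn
    simp only [Finset.mem_product, Finset.mem_range]
    exact ⟨Nat.div_lt_of_lt_mul (by rwa [mul_comm] at hn), Nat.mod_lt _ hP⟩
  · intro p hp
    simp only [Finset.mem_product, Finset.mem_range] at hp
    simp only [Finset.mem_range]
    have h1 : P * (p.1 + 1) ≤ P * N := Nat.mul_le_mul_left P hp.1
    have h2 : P * (p.1 + 1) = P * p.1 + P := Nat.mul_succ P p.1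
    have h3 : N * P = P * N := Nat.mul_comm N P
    omega
  · intro n _
    exact Nat.div_add_mod n P
  · intro p hp
    simp only [Finset.mem_product, Finset.mem_range] at hp
    have h1 : (P * p.1 + p.2) / P = p.1 := by
      rw [Nat.mul_add_div hP, Nat.div_eq_of_lt hp.2, add_zero]
    have h2 : (P * p.1 + p.2) % P = p.2 := by
      rw [Nat.mul_add_mod, Nat.mod_eq_of_lt hp.2]
    exact Prod.ext h1 h2
  · intro n _
    simp only
    rw [Nat.div_add_mod n P]

private lemma innerSum (N P : ℕ) (l : Fin N → ℕ)
    (hinj : Function.Injective l) (hlP : ∀ t, l t < P)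
    (A B : Fin N → ℂ) (w : ℕ → ℂ) :
    ∑ s ∈ Finset.range P,
      ((∑ t : Fin N, if l t = s then A t else 0) *
       (starRingEnd ℂ) (∑ t : Fin N, if l t = s then B t else 0) * w s)
    = ∑ t : Fin N, A t * (starRingEnd ℂ) (B t) * w (l t) := by
  have hX : ∀ s : ℕ,
      (∑ t : Fin N, if l t = s then A t else 0) *
       (starRingEnd ℂ) (∑ t : Fin N, if l t = s then B t else 0) * w s
      = ∑ t : Fin N, if l t = s then
          A t * ((starRingEnd ℂ) (∑ u : Fin N, if l u = s then B u else 0) * w s) else 0 := by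
    intro s
    rw [mul_assoc, Finset.sum_mul]
    apply Finset.sum_congr rfl
    intro t _
    rw [ite_mul, zero_mul]
  simp only [hX]
  rw [Finset.sum_comm]
  apply Finset.sum_congr rfl
  intro t _
  rw [Finset.sum_ite_eq (Finset.range P) (l t)]
  simp only [Finset.mem_range, hlP t, if_true]
  have : (∑ u : Fin N, if l u = l t then B u else 0) = B t := by
    have he : ∀ u : Fin N, (if l u = l t then B u else 0) = if u = t then B u else 0 := by
      intro u
      simp only [hinj.eq_iff]
    simp only [he]
    simp
  rw [this]
  ring

private lemma key (N P : ℕ) (hN : 0 < N) (hP : 0 < P)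
    (l : Fin N → ℕ) (hinj : Function.Injective l) (hlP : ∀ t, l t < P)
    (g' : Fin N → ℕ) (h1 h2 : Fin N → ℂ) (τ : ℕ) :
    ∑ n ∈ Finset.range (N * P),
      uhatH N P l g' h1 n * (starRingEnd ℂ) (uhatH N P l g' h2 n) *
        Complex.exp (-(2 * (Real.pi : ℂ) * Complex.I * (n : ℂ) * (τ : ℂ) / ((N * P : ℕ) : ℂ)))
    = ((P : ℂ) / (N : ℂ)) *
        (∑ r ∈ Finset.range N,
          Complex.exp (-(2 * (Real.pi : ℂ) * Complex.I * (τ : ℂ) / (N : ℂ))) ^ r) *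
      ∑ t : Fin N, h1 t * (starRingEnd ℂ) (h2 t) *
        Complex.exp (-(2 * (Real.pi : ℂ) * Complex.I * ((l t) : ℂ) * (τ : ℂ) / ((N * P : ℕ) : ℂ))) := by
  have hN' : (N : ℂ) ≠ 0 := Nat.cast_ne_zero.2 hN.ne'
  have hP' : (P : ℂ) ≠ 0 := Nat.cast_ne_zero.2 hP.ne'
  set x : ℂ := Complex.exp (-(2 * (Real.pi : ℂ) * Complex.I * (τ : ℂ) / (N : ℂ))) with hxdef
  rw [sum_range_mul_eq N P hP]
  have main : ∀ r ∈ Finset.range N,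
      (∑ s ∈ Finset.range P,
        uhatH N P l g' h1 (P * r + s) * (starRingEnd ℂ) (uhatH N P l g' h2 (P * r + s)) *
          Complex.exp (-(2 * (Real.pi : ℂ) * Complex.I * ((P * r + s : ℕ) : ℂ) * (τ : ℂ) / ((N * P : ℕ) : ℂ))))
      = (((P : ℂ) / (N : ℂ)) * x ^ r) *
        ∑ t : Fin N, h1 t * (starRingEnd ℂ) (h2 t) *
          Complex.exp (-(2 * (Real.pi : ℂ) * Complex.I * ((l t) : ℂ) * (τ : ℂ) / ((N * P : ℕ) : ℂ))) := by
    intro r _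
    have huh : ∀ (h : Fin N → ℂ) (s : ℕ), s < P → uhatH N P l g' h (P * r + s)
        = ∑ t : Fin N, if l t = s then
            ((Real.sqrt ((P : ℝ) / (N : ℝ)) : ℂ) *
              Complex.exp (2 * (Real.pi : ℂ) * Complex.I * ((r * g' t : ℕ) : ℂ) / (N : ℂ)) * h t)
          else 0 := by
      intro h s hs
      have hdiv : (P * r + s) / P = r := by
        rw [Nat.mul_add_div hP, Nat.div_eq_of_lt hs, add_zero]
      have hmod : (P * r + s) % P = s := by
        rw [Nat.mul_add_mod, Nat.mod_eq_of_lt hs]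
      simp only [uhatH, hdiv, hmod]
    have hstep : ∀ s ∈ Finset.range P,
        uhatH N P l g' h1 (P * r + s) * (starRingEnd ℂ) (uhatH N P l g' h2 (P * r + s)) *
          Complex.exp (-(2 * (Real.pi : ℂ) * Complex.I * ((P * r + s : ℕ) : ℂ) * (τ : ℂ) / ((N * P : ℕ) : ℂ)))
        = (∑ t : Fin N, if l t = s then
            ((Real.sqrt ((P : ℝ) / (N : ℝ)) : ℂ) *
              Complex.exp (2 * (Real.pi : ℂ) * Complex.I * ((r * g' t : ℕ) : ℂ) / (N : ℂ)) * h1 t) else 0) *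
          (starRingEnd ℂ) (∑ t : Fin N, if l t = s then
            ((Real.sqrt ((P : ℝ) / (N : ℝ)) : ℂ) *
              Complex.exp (2 * (Real.pi : ℂ) * Complex.I * ((r * g' t : ℕ) : ℂ) / (N : ℂ)) * h2 t) else 0) *
          (fun s => Complex.exp (-(2 * (Real.pi : ℂ) * Complex.I * ((P * r + s : ℕ) : ℂ) * (τ : ℂ) / ((N * P : ℕ) : ℂ)))) s := by
      intro s hs
      rw [huh h1 s (Finset.mem_range.1 hs), huh h2 s (Finset.mem_range.1 hs)]
    rw [Finset.sum_congr rfl hstep,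
      innerSum N P l hinj hlP _ _
        (fun s => Complex.exp (-(2 * (Real.pi : ℂ) * Complex.I * ((P * r + s : ℕ) : ℂ) * (τ : ℂ) / ((N * P : ℕ) : ℂ))))]
    rw [Finset.mul_sum]
    apply Finset.sum_congr rfl
    intro t _
    beta_reduce
    -- per-term computation
    set C : ℂ := (Real.sqrt ((P : ℝ) / (N : ℝ)) : ℂ) with hCdef
    set E : ℂ := Complex.exp (2 * (Real.pi : ℂ) * Complex.I * ((r * g' t : ℕ) : ℂ) / (N : ℂ)) with hEdef
    have hconjC : (starRingEnd ℂ) C = C := Complex.conj_ofReal _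
    have hconjE : (starRingEnd ℂ) E = Complex.exp (-(2 * (Real.pi : ℂ) * Complex.I * ((r * g' t : ℕ) : ℂ) / (N : ℂ))) :=
      conjExp _ (conj_two_pi_I_nat _ N)
    have hEE : E * (starRingEnd ℂ) E = 1 := by
      rw [hconjE, hEdef, ← Complex.exp_add, add_neg_cancel, Complex.exp_zero]
    have hCC : C * C = (P : ℂ) / (N : ℂ) := by
      rw [hCdef, ← Complex.ofReal_mul, Real.mul_self_sqrt (by positivity)]
      push_cast
      ring
    have hw : Complex.exp (-(2 * (Real.pi : ℂ) * Complex.I * ((P * r + l t : ℕ) : ℂ) * (τ : ℂ) / ((N * P : ℕ) : ℂ)))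
        = x ^ r * Complex.exp (-(2 * (Real.pi : ℂ) * Complex.I * ((l t) : ℂ) * (τ : ℂ) / ((N * P : ℕ) : ℂ))) := by
      rw [hxdef, ← Complex.exp_nat_mul, ← Complex.exp_add]
      congr 1
      push_cast
      field_simp
      ring
    rw [map_mul, map_mul, hconjC, hw]
    calc C * E * h1 t * (C * (starRingEnd ℂ) E * (starRingEnd ℂ) (h2 t)) *
          (x ^ r * Complex.exp (-(2 * (Real.pi : ℂ) * Complex.I * ((l t) : ℂ) * (τ : ℂ) / ((N * P : ℕ) : ℂ))))
        = (C * C) * (E * (starRingEnd ℂ) E) * x ^ r *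
            (h1 t * (starRingEnd ℂ) (h2 t) *
              Complex.exp (-(2 * (Real.pi : ℂ) * Complex.I * ((l t) : ℂ) * (τ : ℂ) / ((N * P : ℕ) : ℂ)))) := by
          ring
      _ = (P : ℂ) / (N : ℂ) * x ^ r *
            (h1 t * (starRingEnd ℂ) (h2 t) *
              Complex.exp (-(2 * (Real.pi : ℂ) * Complex.I * ((l t) : ℂ) * (τ : ℂ) / ((N * P : ℕ) : ℂ)))) := by
          rw [hCC, hEE, mul_one]
  rw [Finset.sum_congr rfl main, ← Finset.sum_mul, ← Finset.mul_sum]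

private lemma geomZero (N τ : ℕ) (h0 : 0 < τ) (hτ : τ < N) :
    ∑ r ∈ Finset.range N,
      Complex.exp (-(2 * (Real.pi : ℂ) * Complex.I * (τ : ℂ) / (N : ℂ))) ^ r = 0 := by
  have hN : 0 < N := h0.trans hτ
  have hN' : (N : ℂ) ≠ 0 := Nat.cast_ne_zero.2 hN.ne'
  have h2pii : (2 * (Real.pi : ℂ) * Complex.I) ≠ 0 := by
    simp [Real.pi_ne_zero, Complex.I_ne_zero]
  have hx : Complex.exp (-(2 * (Real.pi : ℂ) * Complex.I * (τ : ℂ) / (N : ℂ))) ≠ 1 := by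
    intro h1
    rw [Complex.exp_eq_one_iff] at h1
    obtain ⟨k, hk⟩ := h1
    rw [← neg_div, div_eq_iff hN'] at hk
    have hcast : -(τ : ℂ) = (k : ℂ) * (N : ℂ) :=
      mul_left_cancel₀ h2pii (by linear_combination hk)
    have hint : -(τ : ℤ) = k * (N : ℤ) := by exact_mod_cast hcast
    have hN0 : (0 : ℤ) < (N : ℤ) := by exact_mod_cast hN
    rcases lt_trichotomy k 0 with h' | h' | h'
    · have : k * (N : ℤ) ≤ -1 * N := mul_le_mul_of_nonneg_right (by omega) hN0.le
      omega
    · subst h'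
      simp at hint
      omega
    · have : 1 * (N : ℤ) ≤ k * N := mul_le_mul_of_nonneg_right (by omega) hN0.le
      omega
  rw [geom_sum_eq hx]
  have hxN : Complex.exp (-(2 * (Real.pi : ℂ) * Complex.I * (τ : ℂ) / (N : ℂ))) ^ N = 1 := by
    rw [← Complex.exp_nat_mul]
    have : (N : ℂ) * -(2 * (Real.pi : ℂ) * Complex.I * (τ : ℂ) / (N : ℂ))
        = ((-(τ : ℤ) : ℤ) : ℂ) * (2 * (Real.pi : ℂ) * Complex.I) := by
      push_cast
      field_simp
    rw [this, Complex.exp_int_mul_two_pi_mul_I]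
  simp [hxN]

/-- let `N ≥ 2`, `T ≥ 1`, `P = N+T`, `L = NP`, `I ⊆ Z_P` with `|I| = T`,
increasing enumeration `l` of `Z_P \ I`, `g` a permutation of `Z_N`, and `H` an `N×N`
complex matrix with pairwise orthogonal rows. Then the time-domain sequences
`U^0, …, U^{N-1}` form a ZCZ sequence set with zero-correlation-zone width `N`:
`θ_{U^{c₀},U^{c₁}}(τ) = 0` for all `c₀, c₁` and `0 < τ < N`, and
`θ_{U^{c₀},U^{c₁}}(0) = 0` for all `c₀ ≠ c₁`. -/
theorem stmt18 (N T : ℕ) (hN : 2 ≤ N) (hT : 1 ≤ T)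
    (I : Finset ℕ) (hIsub : I ⊆ Finset.range (N + T)) (hIcard : I.card = T)
    (l : Fin N → ℕ) (hlmono : StrictMono l) (hlP : ∀ t, l t < N + T)
    (hlI : ∀ s < N + T, (s ∉ I ↔ ∃ t, l t = s))
    (g : Equiv.Perm (ZMod N))
    (H : Fin N → Fin N → ℂ)
    (hH : ∀ c0 c1 : Fin N, c0 ≠ c1 → ∑ s : Fin N, H c0 s * (starRingEnd ℂ) (H c1 s) = 0)
    (U : Fin N → ℕ → ℂ)
    (hU : ∀ (c : Fin N) (t : ℕ), U c t =
      iudft (N * (N + T))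
        (uhatH N (N + T) l (fun t => (g ((t : ℕ) : ZMod N)).val) (H c)) t) :
    (∀ c0 c1 : Fin N, ∀ τ : ℕ, 0 < τ → τ < N → pcc (N * (N + T)) (U c0) (U c1) τ = 0) ∧
    (∀ c0 c1 : Fin N, c0 ≠ c1 → pcc (N * (N + T)) (U c0) (U c1) 0 = 0) := by
  have hN0 : 0 < N := by omega
  have hP0 : 0 < N + T := by omega
  have hL0 : 0 < N * (N + T) := Nat.mul_pos hN0 hP0
  have hinj : Function.Injective l := hlmono.injective
  have hUfun : ∀ c : Fin N, U c =
      iudft (N * (N + T)) (uhatH N (N + T) l (fun t => (g ((t : ℕ) : ZMod N)).val) (H c)) :=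
    fun c => funext (hU c)
  constructor
  · intro c0 c1 τ hτ0 hτN
    rw [hUfun c0, hUfun c1, pcc_iudft _ hL0,
      key N (N + T) hN0 hP0 l hinj hlP _ (H c0) (H c1) τ,
      geomZero N τ hτ0 hτN, mul_zero, zero_mul]
  · intro c0 c1 hne
    rw [hUfun c0, hUfun c1, pcc_iudft _ hL0,
      key N (N + T) hN0 hP0 l hinj hlP _ (H c0) (H c1) 0]
    simp only [Nat.cast_zero, mul_zero, zero_div, neg_zero, Complex.exp_zero, one_pow,
      mul_one, Finset.sum_const, Finset.card_range, nsmul_eq_mul]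
    rw [hH c0 c1 hne, mul_zero]
end
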